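/- Let A > 0, C > 0, β > 0, and let L = ( −(2C−1) + √((2C−1)² + 8C) )/2. For every ξ₁ with C·A/L < ξ₁ < A·(2C+1)/2, there exists a unique ξ₂ > 0 satisfying the relation C·A/ξ₁ = G( β·ξ₂·(1/A + 1/(2ξ₁)) ), where G = g∘e. -/

import Mathlib

/-- The function e(x) = (2/x²)·eˣ − (1 + 2/x + 2/x²). -/
noncomputable def eFun (x : ℝ) : ℝ :=
  2 / x ^ 2 * Real.exp x - (1 + 2 / x + 2 / x ^ 2)

/-- The function g(x) for a parameter C. -/
noncomputable def gFun (C x : ℝ) : ℝ :=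
  (1 / 2) * (-(2 * C - 1 + x * (2 * C + 1)) +
    Real.sqrt ((2 * C - 1 + x * (2 * C + 1)) ^ 2 + 8 * C * (x + 1)))

/-- The composite G = g ∘ e. -/
noncomputable def GFun (C x : ℝ) : ℝ := gFun C (eFun x)

/-!
Since `√((2C−1)² + 8C) = 2C + 1` we have `L = 1`, so the hypotheses say that
`v = C·A/ξ₁` lies in `(2C/(2C+1), 1)`. For `u > 0`, `g(u)` is the positive root `v` of
`v² + (2C − 1 + u(2C + 1))·v − 2C(u + 1) = 0`, which is linear in `u`: solving it gives
`u = (1 − v)(v + 2C)/((2C+1)v − 2C)`, positive exactly on that interval. The equation therefore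
reduces to `e(t) = u` with `t = β·ξ₂·(1/A + 1/(2ξ₁))`, and `e` is a strictly increasing
bijection of `(0, ∞)`: its derivative is `2(eˣ(x − 2) + x + 2)/x³ > 0`, and
`x/3 ≤ e(x) ≤ x` for `0 < x ≤ 1` (the lower bound for all `x > 0`) by Taylor's bounds for `exp`.
-/

open Real Set

lemma div_three_le_eFun {x : ℝ} (hx : 0 < x) : x / 3 ≤ eFun x := by
  have hexp := sum_le_exp_of_nonneg hx.le 4
  norm_num [Finset.sum_range_succ, Nat.factorial] at hexp
  have hdiff : eFun x - x / 3 = 2 * (exp x - (1 + x + x ^ 2 / 2 + x ^ 3 / 6)) / x ^ 2 := by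
    rw [eFun]; field_simp; ring
  have : 0 ≤ 2 * (exp x - (1 + x + x ^ 2 / 2 + x ^ 3 / 6)) / x ^ 2 := by
    apply div_nonneg _ (sq_nonneg x); linarith
  linarith

lemma eFun_pos {x : ℝ} (hx : 0 < x) : 0 < eFun x :=
  (div_pos hx three_pos).trans_le (div_three_le_eFun hx)

lemma eFun_le_self {x : ℝ} (hx : 0 < x) (hx1 : x ≤ 1) : eFun x ≤ x := by
  have hexp := exp_bound' hx.le hx1 (n := 3) (by norm_num)
  norm_num [Finset.sum_range_succ, Nat.factorial] at hexp
  have hdiff : x - eFun x = (x ^ 3 + x ^ 2 + 2 * x + 2 - 2 * exp x) / x ^ 2 := by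
    rw [eFun]; field_simp; ring
  have : 0 ≤ (x ^ 3 + x ^ 2 + 2 * x + 2 - 2 * exp x) / x ^ 2 := by
    apply div_nonneg _ (sq_nonneg x); nlinarith
  linarith

lemma continuousOn_eFun : ContinuousOn eFun (Ioi 0) := fun x hx =>
  have hx0 : x ≠ 0 := ne_of_gt hx
  ContinuousAt.continuousWithinAt (by unfold eFun; fun_prop (disch := simp [hx0]))

lemma exp_mul_sub_two_add_add_two_pos {x : ℝ} (hx : 0 < x) : 0 < exp x * (x - 2) + x + 2 := by
  let φ : ℝ → ℝ := fun y => exp y * (y - 2) + y + 2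
  have hφ : ∀ y, HasDerivAt φ (exp y * (y - 1) + 1) y := fun y => by
    refine ((((hasDerivAt_exp y).mul ((hasDerivAt_id y).sub_const 2)).add
      (hasDerivAt_id y)).add_const 2).congr_deriv ?_
    simp only [id]; ring
  have hmono : StrictMonoOn φ (Ici 0) := by
    refine strictMonoOn_of_deriv_pos (convex_Ici 0)
      (fun y _ => (hφ y).continuousAt.continuousWithinAt) fun y hy => ?_
    rw [interior_Ici] at hy
    -- `1 − y < e^{−y}`, multiplied by `e^y`
    have hlt : -y + 1 < exp (-y) := add_one_lt_exp (neg_ne_zero.2 (ne_of_gt hy))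
    have hinv : exp (-y) * exp y = 1 := by rw [← exp_add]; simp
    rw [(hφ y).deriv]
    nlinarith [exp_pos y]
  simpa [φ] using hmono self_mem_Ici hx.le hx

lemma hasDerivAt_eFun {x : ℝ} (hx : x ≠ 0) :
    HasDerivAt eFun (2 * (exp x * (x - 2) + x + 2) / x ^ 3) x := by
  let N : ℝ → ℝ := fun y => 2 * exp y - y ^ 2 - 2 * y - 2
  have hN : HasDerivAt N (2 * exp x - 2 * x - 2) x := by
    refine ((((hasDerivAt_exp x).const_mul 2).sub (hasDerivAt_pow 2 x)).sub
      ((hasDerivAt_id x).const_mul 2)).sub_const 2 |>.congr_deriv ?_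
    norm_num
  have heq : (fun y => N y / y ^ 2) =ᶠ[nhds x] eFun := by
    filter_upwards [isOpen_ne.mem_nhds hx] with y hy
    simp only [N, eFun]; field_simp; ring
  refine ((hN.div (hasDerivAt_pow 2 x) (pow_ne_zero 2 hx)).congr_of_eventuallyEq
    heq.symm).congr_deriv ?_
  simp only [N]; field_simp; ring

lemma strictMonoOn_eFun : StrictMonoOn eFun (Ioi 0) := by
  refine strictMonoOn_of_deriv_pos (convex_Ioi 0) continuousOn_eFun fun x hx => ?_
  rw [interior_Ioi] at hx
  rw [(hasDerivAt_eFun (ne_of_gt hx)).deriv]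
  exact div_pos (by linarith [exp_mul_sub_two_add_add_two_pos hx]) (pow_pos hx 3)

lemma existsUnique_eFun_eq {u : ℝ} (hu : 0 < u) : ∃! t, 0 < t ∧ eFun t = u := by
  have hab : min 1 u ≤ max 1 (3 * u) := (min_le_left _ _).trans (le_max_left _ _)
  have hpos : 0 < min 1 u := lt_min one_pos hu
  have hsub : Icc (min 1 u) (max 1 (3 * u)) ⊆ Ioi 0 := fun y hy => hpos.trans_le hy.1
  have hlow : eFun (min 1 u) ≤ u :=
    (eFun_le_self hpos (min_le_left _ _)).trans (min_le_right _ _)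
  have hhigh : u ≤ eFun (max 1 (3 * u)) := by
    have := div_three_le_eFun (hpos.trans_le hab)
    linarith [le_max_right 1 (3 * u)]
  obtain ⟨t, ht, htu⟩ :=
    intermediate_value_Icc hab (continuousOn_eFun.mono hsub) ⟨hlow, hhigh⟩
  exact ⟨t, ⟨hsub ht, htu⟩, fun s ⟨hs, hsu⟩ =>
    strictMonoOn_eFun.injOn hs (hsub ht) (hsu.trans htu.symm)⟩

lemma gFun_eq_iff {C u v : ℝ} (hC : 0 < C) (hu : -1 < u) (hv : 0 < v) :
    gFun C u = v ↔ v ^ 2 + (2 * C - 1 + u * (2 * C + 1)) * v - 2 * C * (u + 1) = 0 := by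
  set b := 2 * C - 1 + u * (2 * C + 1)
  have hdisc : 0 ≤ b ^ 2 + 8 * C * (u + 1) := by nlinarith [sq_nonneg b]
  rw [gFun]
  constructor
  · intro h
    have hsqrt : √(b ^ 2 + 8 * C * (u + 1)) = 2 * v + b := by linarith
    nlinarith [sq_sqrt hdisc]
  · intro h
    have hroot : 0 < 2 * v + b := by nlinarith
    have hsq : b ^ 2 + 8 * C * (u + 1) = (2 * v + b) ^ 2 := by nlinarith
    rw [hsq, sqrt_sq hroot.le]
    ring

lemma GFun_eq_iff {C t v : ℝ} (hC : 0 < C) (ht : 0 < t) (hv : 2 * C < (2 * C + 1) * v) :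
    GFun C t = v ↔ eFun t = (1 - v) * (v + 2 * C) / ((2 * C + 1) * v - 2 * C) := by
  have hv0 : 0 < v := by nlinarith
  have hden : (2 * C + 1) * v - 2 * C ≠ 0 := by linarith
  rw [GFun, gFun_eq_iff hC (by linarith [eFun_pos ht]) hv0, eq_div_iff hden]
  constructor <;> intro h <;> linarith

lemma existsUnique_GFun_eq {C v : ℝ} (hC : 0 < C) (hv : 2 * C < (2 * C + 1) * v) (hv1 : v < 1) :
    ∃! t, 0 < t ∧ GFun C t = v := by
  have hu : 0 < (1 - v) * (v + 2 * C) / ((2 * C + 1) * v - 2 * C) := by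
    have : 0 < v := by nlinarith
    apply div_pos <;> nlinarith
  obtain ⟨t, ⟨ht, htu⟩, huniq⟩ := existsUnique_eFun_eq hu
  refine ⟨t, ⟨ht, (GFun_eq_iff hC ht hv).2 htu⟩, fun s ⟨hs, hsv⟩ => ?_⟩
  exact huniq s ⟨hs, (GFun_eq_iff hC hs hv).1 hsv⟩

lemma existsUnique_pos_mul_of_existsUnique_pos {P : ℝ → Prop} {c : ℝ} (hc : 0 < c)
    (h : ∃! t, 0 < t ∧ P t) : ∃! s, 0 < s ∧ P (c * s) := by
  obtain ⟨t, ⟨ht, hPt⟩, huniq⟩ := h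
  refine ⟨t / c, ⟨div_pos ht hc, by rwa [mul_div_cancel₀ t hc.ne']⟩, fun s ⟨hs, hPs⟩ => ?_⟩
  rw [eq_div_iff hc.ne', mul_comm]
  exact huniq _ ⟨mul_pos hc hs, hPs⟩

/-- For every ξ₁ with C·A/L < ξ₁ < A·(2C+1)/2, there exists a unique
ξ₂ > 0 with C·A/ξ₁ = G(β·ξ₂·(1/A + 1/(2ξ₁))), where
L = (−(2C−1) + √((2C−1)² + 8C))/2. -/
theorem stmt_11 (A C β ξ₁ : ℝ) (hA : 0 < A) (hC : 0 < C) (hβ : 0 < β)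
    (h₁ : C * A / ((-(2 * C - 1) + Real.sqrt ((2 * C - 1) ^ 2 + 8 * C)) / 2) < ξ₁)
    (h₂ : ξ₁ < A * (2 * C + 1) / 2) :
    ∃! ξ₂ : ℝ, 0 < ξ₂ ∧ C * A / ξ₁ = GFun C (β * ξ₂ * (1 / A + 1 / (2 * ξ₁))) := by
  have hL : (-(2 * C - 1) + √((2 * C - 1) ^ 2 + 8 * C)) / 2 = 1 := by
    rw [show (2 * C - 1) ^ 2 + 8 * C = (2 * C + 1) ^ 2 by ring, sqrt_sq (by linarith)]
    ring
  rw [hL, div_one] at h₁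
  have hξ₁ : 0 < ξ₁ := (mul_pos hC hA).trans h₁
  have hv : 2 * C < (2 * C + 1) * (C * A / ξ₁) := by
    rw [mul_div_assoc', lt_div_iff₀ hξ₁]; nlinarith
  have hv1 : C * A / ξ₁ < 1 := (div_lt_one hξ₁).2 h₁
  have hc : 0 < β * (1 / A + 1 / (2 * ξ₁)) := by positivity
  simpa only [eq_comm, mul_right_comm β] using
    existsUnique_pos_mul_of_existsUnique_pos hc (existsUnique_GFun_eq hC hv hv1)
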